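/- arXiv:2509.05687 — 2 statements merged into one kernel-verified Lean document; each statement's English description precedes it below -/
import Mathlib

section
/- The set of Liouville numbers has Hausdorff dimension zero. -/
/-!
For `r < p`, a number `x ∈ [0, 1]` with `LiouvilleWith p x` lies in infinitely many of the balls
`B(a / b, b ^ (-r))`, `0 ≤ a ≤ b`. For each `b` there are `b + 1` of them, of diameter at most
`2 b ^ (-r)`, so `∑ diam ^ d < ∞` once `r * d > 2`, and the Hausdorff–Cantelli lemma (Borel–Cantelli
with `diam ^ d` in place of the measure) makes their limsup `μH[d]`-null. Together with integer
translations this gives `dimH {x | LiouvilleWith p x} ≤ 2 / p`, and a Liouville number satisfies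
`LiouvilleWith p` for every `p`.
-/

open MeasureTheory

open Filter Set Metric
open scoped ENNReal Topology

theorem hausdorffMeasure_limsup_cofinite_eq_zero {X ι : Type*} [EMetricSpace X] [MeasurableSpace X]
    [BorelSpace X] [Countable ι] {d : ℝ} (hd : 0 < d) {s : ι → Set X}
    (hs : ∑' i, ediam (s i) ^ d ≠ ∞) : μH[d] (limsup s cofinite) = 0 := by
  set tail : Finset ι → ℝ≥0∞ := fun F => ∑' i : {i // i ∉ F}, ediam (s i) ^ d
  have htail : Tendsto tail atTop (𝓝 0) := ENNReal.tendsto_tsum_compl_atTop_zero hs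
  have hdiam : Tendsto (fun F => tail F ^ d⁻¹) atTop (𝓝 0) := by
    have := ((ENNReal.continuous_rpow_const (y := d⁻¹)).tendsto 0).comp htail
    rwa [ENNReal.zero_rpow_of_pos (inv_pos.2 hd)] at this
  refine le_antisymm ?_ zero_le
  calc μH[d] (limsup s cofinite)
      ≤ liminf (fun F : Finset ι => ∑' i : {i // i ∉ F}, ediam (s i) ^ d) atTop :=
        Measure.hausdorffMeasure_le_liminf_tsum d _ _ hdiam (fun F (i : {i // i ∉ F}) => s i)
          (Eventually.of_forall fun F i => ?_) (Eventually.of_forall fun F x hx => ?_)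
    _ = 0 := htail.liminf_eq
  · calc ediam (s i) = (ediam (s i) ^ d) ^ d⁻¹ := (ENNReal.rpow_rpow_inv hd.ne' _).symm
      _ ≤ tail F ^ d⁻¹ := by gcongr; exact ENNReal.le_tsum i
  · obtain ⟨i, hxi, hiF⟩ := (frequently_cofinite_iff_infinite.1
      (mem_limsup_iff_frequently_mem.1 hx)).exists_notMem_finset F
    exact mem_iUnion.2 ⟨⟨i, hiF⟩, hxi⟩

theorem summable_natCast_add_one_mul_rpow_neg {s : ℝ} (hs : 2 < s) :
    Summable fun b : ℕ => ((b : ℝ) + 1) * (b : ℝ) ^ (-s) := by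
  have hsplit (b : ℕ) : ((b : ℝ) + 1) * (b : ℝ) ^ (-s) = (b : ℝ) ^ (1 + -s) + (b : ℝ) ^ (-s) := by
    rw [Real.rpow_add' b.cast_nonneg (by linarith), Real.rpow_one]; ring
  simp_rw [hsplit]
  exact (Real.summable_nat_rpow.2 (by linarith)).add (Real.summable_nat_rpow.2 (by linarith))

/-- `⟨b, a⟩` encodes the rational `a / b ∈ [0, 1]`. -/
def ratBall (r : ℝ) (q : Σ b : ℕ, Fin (b + 1)) : Set ℝ :=
  ball ((q.2 : ℝ) / q.1) ((q.1 : ℝ) ^ (-r))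

theorem ediam_ratBall_le (r : ℝ) (q : Σ b : ℕ, Fin (b + 1)) :
    ediam (ratBall r q) ≤ ENNReal.ofReal (2 * (q.1 : ℝ) ^ (-r)) := by
  rw [ratBall, ← Metric.eball_ofReal, ENNReal.ofReal_mul zero_le_two, ENNReal.ofReal_ofNat]
  exact ediam_eball_le

theorem tsum_ediam_ratBall_rpow_ne_top {r d : ℝ} (hd : 0 < d) (hrd : 2 < r * d) :
    ∑' q, ediam (ratBall r q) ^ d ≠ ∞ := by
  have hterm (q : Σ b : ℕ, Fin (b + 1)) :
      ediam (ratBall r q) ^ d ≤ ENNReal.ofReal (2 ^ d * (q.1 : ℝ) ^ (-(r * d))) := by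
    calc ediam (ratBall r q) ^ d ≤ ENNReal.ofReal (2 * (q.1 : ℝ) ^ (-r)) ^ d := by
          gcongr; exact ediam_ratBall_le r q
      _ = ENNReal.ofReal (2 ^ d * (q.1 : ℝ) ^ (-(r * d))) := by
          rw [ENNReal.ofReal_rpow_of_nonneg (by positivity) hd.le,
            Real.mul_rpow zero_le_two (by positivity), ← Real.rpow_mul q.1.cast_nonneg, neg_mul]
  have hsum : Summable fun b : ℕ => ((b : ℝ) + 1) * (2 ^ d * (b : ℝ) ^ (-(r * d))) :=
    ((summable_natCast_add_one_mul_rpow_neg hrd).mul_left (2 ^ d)).congr fun b => by ring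
  refine ne_top_of_le_ne_top ?_ (ENNReal.tsum_le_tsum hterm)
  rw [ENNReal.tsum_sigma']
  simp only [tsum_fintype, Finset.sum_const, Finset.card_univ, Fintype.card_fin, nsmul_eq_mul]
  have hmul (b : ℕ) : ((b + 1 : ℕ) : ℝ≥0∞) * ENNReal.ofReal (2 ^ d * (b : ℝ) ^ (-(r * d))) =
      ENNReal.ofReal (((b : ℝ) + 1) * (2 ^ d * (b : ℝ) ^ (-(r * d)))) := by
    rw [← Nat.cast_add_one, ENNReal.ofReal_mul (Nat.cast_nonneg _), ENNReal.ofReal_natCast]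
  simp_rw [hmul, ← ENNReal.ofReal_tsum_of_nonneg (fun b => by positivity) hsum]
  exact ENNReal.ofReal_ne_top

theorem mem_Icc_of_abs_sub_div_lt {x : ℝ} (hx : x ∈ Icc 0 1) {a : ℤ} {b : ℕ} (hb : 0 < b)
    (h : |x - a / b| < 1 / b) : 0 ≤ a ∧ a ≤ b := by
  have hb' : (0 : ℝ) < b := by exact_mod_cast hb
  rw [sub_div' hb'.ne', abs_div, abs_of_pos hb', div_lt_div_iff_of_pos_right hb',
    abs_sub_lt_iff] at h
  have h0 : (-1 : ℤ) < a := by exact_mod_cast (show (-1 : ℝ) < a by nlinarith [hx.1])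
  have h1 : a < (b : ℤ) + 1 := by exact_mod_cast (show (a : ℝ) < b + 1 by nlinarith [hx.2])
  omega

theorem LiouvilleWith.mem_limsup_ratBall {p r x : ℝ} (h : LiouvilleWith p x) (hx : x ∈ Icc 0 1)
    (hr : 1 ≤ r) (hrp : r < p) : x ∈ limsup (ratBall r) cofinite := by
  have happrox : {b : ℕ | ∃ a : Fin (b + 1), x ∈ ratBall r ⟨b, a⟩}.Infinite := by
    refine Nat.frequently_atTop_iff_infinite.1 <|
      ((h.frequently_lt_rpow_neg hrp).and_eventually (eventually_gt_atTop 0)).mono ?_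
    rintro b ⟨⟨a, -, hab⟩, hb⟩
    have hb1 : (1 : ℝ) ≤ b := by exact_mod_cast hb
    have hrad : (b : ℝ) ^ (-r) ≤ 1 / b := by
      rw [one_div, ← Real.rpow_neg_one]
      exact Real.rpow_le_rpow_of_exponent_le hb1 (neg_le_neg hr)
    obtain ⟨ha0, hab'⟩ := mem_Icc_of_abs_sub_div_lt hx hb (hab.trans_le hrad)
    lift a to ℕ using ha0
    exact ⟨⟨a, by omega⟩, by simpa [ratBall, Real.dist_eq] using hab⟩
  rw [mem_limsup_iff_frequently_mem, frequently_cofinite_iff_infinite]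
  refine (happrox.mono ?_).of_image Sigma.fst
  rintro b ⟨a, ha⟩
  exact ⟨⟨b, a⟩, ha, rfl⟩

theorem hausdorffMeasure_setOf_liouvilleWith_inter_Icc_eq_zero {p r d : ℝ} (hr : 1 ≤ r)
    (hrp : r < p) (hd : 0 < d) (hrd : 2 < r * d) :
    μH[d] ({x | LiouvilleWith p x} ∩ Icc 0 1) = 0 :=
  measure_mono_null (fun _ hx => hx.1.mem_limsup_ratBall hx.2 hr hrp)
    (hausdorffMeasure_limsup_cofinite_eq_zero hd (tsum_ediam_ratBall_rpow_ne_top hd hrd))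

theorem dimH_setOf_liouvilleWith_le {p : ℝ} (hp : 1 < p) :
    dimH {x | LiouvilleWith p x} ≤ ENNReal.ofReal (2 / p) := by
  set S := {x | LiouvilleWith p x}
  have hunit : dimH (S ∩ Icc 0 1) ≤ ENNReal.ofReal (2 / p) := by
    refine dimH_le fun d hd => ?_
    by_contra! hlt
    rw [← ENNReal.ofReal_coe_nnreal, ENNReal.ofReal_lt_ofReal_iff'] at hlt
    obtain ⟨hdp, hd0⟩ := hlt
    obtain ⟨r, hr, hrp⟩ := exists_between (max_lt hp ((div_lt_comm₀ (by positivity) hd0).1 hdp))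
    have hrd : 2 < r * d := (div_lt_iff₀ hd0).1 (le_max_right _ _ |>.trans_lt hr)
    rw [hausdorffMeasure_setOf_liouvilleWith_inter_Icc_eq_zero ((le_max_left _ _).trans hr.le) hrp
      hd0 hrd] at hd
    exact ENNReal.zero_ne_top hd
  have hcover : S ⊆ ⋃ m : ℤ, IsometryEquiv.addRight (m : ℝ) '' (S ∩ Icc 0 1) := fun x hx =>
    mem_iUnion.2 ⟨⌊x⌋, Int.fract x,
      ⟨Int.self_sub_floor x ▸ hx.sub_int ⌊x⌋, Int.fract_nonneg x,
        (Int.fract_lt_one x).le⟩, Int.fract_add_floor x⟩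
  calc dimH S ≤ dimH (⋃ m : ℤ, IsometryEquiv.addRight (m : ℝ) '' (S ∩ Icc 0 1)) :=
        dimH_mono hcover
    _ ≤ ENNReal.ofReal (2 / p) := by
      simpa only [dimH_iUnion, IsometryEquiv.dimH_image, ciSup_const] using hunit

/-- The set of Liouville numbers has Hausdorff dimension zero. -/
theorem dimH_liouville : dimH {x : ℝ | Liouville x} = 0 := by
  refine le_antisymm (ENNReal.le_of_forall_pos_le_add fun ε hε _ => ?_) zero_le
  have hε' : (0 : ℝ) < ε := hε
  set p := max 2 (2 / (ε : ℝ))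
  calc dimH {x : ℝ | Liouville x} ≤ dimH {x | LiouvilleWith p x} :=
        dimH_mono fun x hx => hx.liouvilleWith p
    _ ≤ ENNReal.ofReal (2 / p) :=
        dimH_setOf_liouvilleWith_le (one_lt_two.trans_le (le_max_left _ _))
    _ ≤ 0 + ε := by
      rw [zero_add, ← ENNReal.ofReal_coe_nnreal]
      refine ENNReal.ofReal_le_ofReal ((div_le_iff₀ (by positivity)).2 ?_)
      calc (2 : ℝ) = ε * (2 / ε) := by field_simp
        _ ≤ ε * p := by gcongr; exact le_max_right _ _
end

section
/- Let ψ : ℕ → [0,∞) and s ∈ (0,1]. If the series ∑_{r=1}^∞ r·(ψ(r)/r)^s converges, then the s-dimensional Hausdorff measure of W(ψ) = {x ∈ [0,1) : ‖r·x‖ < ψ(r) for infinitely many r ∈ ℕ} is zero. -/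
/-!
Each `x ∈ W(ψ)` lies, for infinitely many `q`, in the closed ball of radius `ψ(q)/q` about `p/q`
with `p = round (q x) ∈ [0, q]`. The `q + 1` balls of level `q` have diameter `2ψ(q)/q`, so the
series of `diam^s` over all of them is `∑ (q + 1) (2ψ(q)/q)^s < ∞`. Hence `W(ψ)` lies in the limsup
of a family of sets with `∑ diam^s < ∞`, and such a limsup is `H^s`-null (Hausdorff–Cantelli):
the sets outside any finite subfamily cover it, with `∑ diam^s` as small as we like.
-/

open MeasureTheory

/-- Distance from `y` to the nearest integer. -/
noncomputable def distNearestInt (y : ℝ) : ℝ := |y - round y|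

/-- The set of `ψ`-well approximable numbers in `[0,1)`. -/
def Wpsi (ψ : ℕ → ℝ) : Set ℝ :=
  {x : ℝ | x ∈ Set.Ico (0 : ℝ) 1 ∧
    {r : ℕ | 0 < r ∧ distNearestInt ((r : ℝ) * x) < ψ r}.Infinite}

open Filter Topology ENNReal Metric Set

theorem hausdorffMeasure_setOf_infinite_mem_eq_zero {X ι : Type*} [EMetricSpace X]
    [MeasurableSpace X] [BorelSpace X] [Countable ι] {d : ℝ} (hd : 0 < d) {U : ι → Set X}
    (hU : ∑' i, ediam (U i) ^ d ≠ ∞) : μH[d] {x | {i | x ∈ U i}.Infinite} = 0 := by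
  set tail : Finset ι → ℝ≥0∞ := fun F => ∑' i : {i // i ∉ F}, ediam (U i) ^ d
  have htail : Tendsto tail atTop (𝓝 0) := tendsto_tsum_compl_atTop_zero hU
  have hr : Tendsto (fun F => tail F ^ d⁻¹) atTop (𝓝 0) := by
    have := ((ENNReal.continuous_rpow_const (y := d⁻¹)).tendsto 0).comp htail
    rwa [ENNReal.zero_rpow_of_pos (inv_pos.2 hd)] at this
  refine le_antisymm ?_ zero_le
  calc μH[d] {x | {i | x ∈ U i}.Infinite}
      ≤ liminf tail atTop := by
        refine Measure.hausdorffMeasure_le_liminf_tsum d _ _ hr (fun F (i : {i // i ∉ F}) => U i)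
          (.of_forall fun F i => (ENNReal.le_rpow_inv_iff hd).2 ?_) (.of_forall fun F x hx => ?_)
        · exact ENNReal.le_tsum i
        · obtain ⟨i, hi, hiF⟩ := (hx : {i | x ∈ U i}.Infinite).exists_notMem_finset F
          exact mem_iUnion.2 ⟨⟨i, hiF⟩, hi⟩
    _ = 0 := htail.liminf_eq

/-- For `q = 0` this is `closedBall 0 0 = {0}`, because `x / 0 = 0`. -/
def rationalBall (ψ : ℕ → ℝ) (i : Σ q : ℕ, Fin (q + 1)) : Set ℝ :=
  closedBall ((i.2 : ℝ) / i.1) (ψ i.1 / i.1)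

theorem round_mul_mem_Icc {x : ℝ} (hx : x ∈ Icc (0 : ℝ) 1) (q : ℕ) :
    round ((q : ℝ) * x) ∈ Icc (0 : ℤ) q := by
  have h0 : 0 ≤ (q : ℝ) * x := mul_nonneg q.cast_nonneg hx.1
  have h1 : (q : ℝ) * x ≤ q := mul_le_of_le_one_right q.cast_nonneg hx.2
  have hlo : (-1 : ℤ) < round ((q : ℝ) * x) := by
    rw [← Int.cast_lt (R := ℝ)]
    push_cast
    linarith [sub_half_lt_round ((q : ℝ) * x)]
  have hhi : round ((q : ℝ) * x) < q + 1 := by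
    rw [← Int.cast_lt (R := ℝ)]
    push_cast
    linarith [round_le_add_half ((q : ℝ) * x)]
  constructor <;> omega

theorem dist_round_mul_div {q : ℕ} (hq : 0 < q) (x : ℝ) :
    dist x (round ((q : ℝ) * x) / q) = distNearestInt (q * x) / q := by
  have hq' : (0 : ℝ) < q := by exact_mod_cast hq
  rw [Real.dist_eq, distNearestInt, ← abs_of_pos hq', ← abs_div, abs_of_pos hq']
  congr 1
  field_simp

theorem Wpsi_subset_setOf_infinite_mem_rationalBall (ψ : ℕ → ℝ) :
    Wpsi ψ ⊆ {x | {i | x ∈ rationalBall ψ i}.Infinite} := by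
  rintro x ⟨hx, hinf⟩
  refine (hinf.mono ?_).of_image Sigma.fst
  rintro q ⟨hq, hψq⟩
  obtain ⟨hp0, hpq⟩ := round_mul_mem_Icc (Ico_subset_Icc_self hx) q
  refine ⟨⟨q, ⟨(round ((q : ℝ) * x)).toNat, by omega⟩⟩, ?_, rfl⟩
  have hcast : (((round ((q : ℝ) * x)).toNat : ℕ) : ℝ) = round ((q : ℝ) * x) := by
    exact_mod_cast Int.toNat_of_nonneg hp0
  show dist x _ ≤ _
  rw [hcast, dist_round_mul_div hq]
  exact div_le_div_of_nonneg_right hψq.le q.cast_nonneg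

theorem ediam_rationalBall (ψ : ℕ → ℝ) (i : Σ q : ℕ, Fin (q + 1)) :
    ediam (rationalBall ψ i) = ENNReal.ofReal (2 * (ψ i.1 / i.1)) := by
  rw [rationalBall, Real.closedBall_eq_Icc, Real.ediam_Icc]
  ring_nf

theorem summable_succ_mul_two_mul_div_rpow {ψ : ℕ → ℝ} (hψ : ∀ q, 0 ≤ ψ q) {s : ℝ} (hs : 0 < s)
    (hsum : Summable fun q : ℕ => (q : ℝ) * (ψ q / q) ^ s) :
    Summable fun q : ℕ => ((q : ℝ) + 1) * (2 * (ψ q / q)) ^ s := by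
  have hnn : ∀ q : ℕ, 0 ≤ ψ q / q := fun q => div_nonneg (hψ q) q.cast_nonneg
  refine (hsum.mul_left (2 * 2 ^ s)).of_nonneg_of_le (fun q => by have := hnn q; positivity)
    fun q => ?_
  rw [Real.mul_rpow zero_le_two (hnn q)]
  rcases Nat.eq_zero_or_pos q with rfl | hq
  · simp [Real.zero_rpow hs.ne']
  · have : (q : ℝ) + 1 ≤ 2 * q := by
      have : (1 : ℝ) ≤ q := by exact_mod_cast hq
      linarith
    calc ((q : ℝ) + 1) * (2 ^ s * (ψ q / q) ^ s) ≤ 2 * q * (2 ^ s * (ψ q / q) ^ s) := by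
          have := hnn q
          gcongr
      _ = 2 * 2 ^ s * (q * (ψ q / q) ^ s) := by ring

theorem tsum_ediam_rationalBall_rpow_ne_top {ψ : ℕ → ℝ} (hψ : ∀ q, 0 ≤ ψ q) {s : ℝ}
    (hs : 0 < s) (hsum : Summable fun q : ℕ => (q : ℝ) * (ψ q / q) ^ s) :
    ∑' i, ediam (rationalBall ψ i) ^ s ≠ ∞ := by
  convert (summable_succ_mul_two_mul_div_rpow hψ hs hsum).tsum_ofReal_ne_top using 1
  rw [ENNReal.tsum_sigma']
  congr 1
  ext q
  have hnn : 0 ≤ 2 * (ψ q / q) := by have := hψ q; positivity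
  simp only [ediam_rationalBall, tsum_fintype, Finset.sum_const, Finset.card_univ, Fintype.card_fin,
    nsmul_eq_mul, ENNReal.ofReal_rpow_of_nonneg hnn hs.le]
  rw [ENNReal.ofReal_mul (by positivity)]
  norm_cast

theorem khintchine_jarnik_convergence_general (ψ : ℕ → ℝ) (hψ : ∀ r, 0 ≤ ψ r)
    (s : ℝ) (hs0 : 0 < s)
    (hsum : Summable fun r : ℕ => (r : ℝ) * (ψ r / r) ^ s) :
    μH[s] (Wpsi ψ) = 0 :=
  measure_mono_null (Wpsi_subset_setOf_infinite_mem_rationalBall ψ)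
    (hausdorffMeasure_setOf_infinite_mem_eq_zero hs0
      (tsum_ediam_rationalBall_rpow_ne_top hψ hs0 hsum))

/-- Convergence part of the Khintchine–Jarník theorem: if `∑ r (ψ(r)/r)^s < ∞` then
`H^s(W(ψ)) = 0`. -/
theorem khintchine_jarnik_convergence (ψ : ℕ → ℝ) (hψ : ∀ r, 0 ≤ ψ r)
    (s : ℝ) (hs0 : 0 < s) (hs1 : s ≤ 1)
    (hsum : Summable fun r : ℕ => (r : ℝ) * (ψ r / r) ^ s) :
    μH[s] (Wpsi ψ) = 0 :=
  khintchine_jarnik_convergence_general ψ hψ s hs0 hsum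
end
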